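/- arXiv:1404.6821 — 7 statements merged into one kernel-verified Lean document; each statement's English description precedes it below -/
import Mathlib

section
/- The theta graph Θ_{3,3,3} is not (4:2)-choosable; that is, there exists a list assignment L on Θ_{3,3,3} with |L(v)| = 4 for every vertex v such that Θ_{3,3,3} has no 2-tuple L-colouring. -/
/-- `f` is a `b`-tuple `L`-colouring of `G`: each vertex gets a `b`-set of colours
from its list, and adjacent vertices get disjoint sets. -/
def IsTupleListColoring {V : Type*} (G : SimpleGraph V) (L : V → Finset ℕ) (b : ℕ)
    (f : V → Finset ℕ) : Prop :=
  (∀ v, f v ⊆ L v) ∧ (∀ v, (f v).card = b) ∧ ∀ ⦃u v⦄, G.Adj u v → Disjoint (f u) (f v)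

/-- `G` is `(L:b)`-colourable. -/
def ListColorable {V : Type*} (G : SimpleGraph V) (L : V → Finset ℕ) (b : ℕ) : Prop :=
  ∃ f, IsTupleListColoring G L b f

/-- `G` is `(a:b)`-choosable. -/
def Choosable {V : Type*} (G : SimpleGraph V) (a b : ℕ) : Prop :=
  ∀ L : V → Finset ℕ, (∀ v, (L v).card = a) → ListColorable G L b

/-- `G` is the theta graph `Θ_{r,s,t}`: two vertices `u ≠ v` joined by three internally
vertex-disjoint paths of `r`, `s`, `t` edges, which together cover all vertices and edges. -/
def IsThetaGraph {V : Type*} (G : SimpleGraph V) (u v : V) (r s t : ℕ) : Prop :=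
  u ≠ v ∧ ∃ (P Q R : G.Walk u v),
    P.IsPath ∧ Q.IsPath ∧ R.IsPath ∧
    P.length = r ∧ Q.length = s ∧ R.length = t ∧
    (∀ x, x ∈ P.support → x ∈ Q.support → x = u ∨ x = v) ∧
    (∀ x, x ∈ P.support → x ∈ R.support → x = u ∨ x = v) ∧
    (∀ x, x ∈ Q.support → x ∈ R.support → x = u ∨ x = v) ∧
    (∀ x : V, x ∈ P.support ∨ x ∈ Q.support ∨ x ∈ R.support) ∧
    (∀ e ∈ G.edgeSet, e ∈ P.edges ∨ e ∈ Q.edges ∨ e ∈ R.edges)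

/-!
Give the two branch vertices the list `{0, 1, 2, 3}` and the interior vertices of the three
paths the lists `{0, 1, 2, 4}, {0, 1, 3, 4}`, then `{0, 1, 3, 4}, {0, 2, 3, 4}`, then
`{0, 2, 3, 4}, {0, 1, 2, 4}`. A finite check shows that, whichever pairs of colours the branch
vertices receive, one of the three paths cannot be coloured between them. Non-choosability then
passes from this model of `Θ_{3,3,3}` to any graph containing a copy of it.
-/

open SimpleGraph Finset

theorem Choosable.of_isContained {W V : Type*} {H : SimpleGraph W} {G : SimpleGraph V}
    {a b : ℕ} (hG : Choosable G a b) (hHG : H ⊑ G) : Choosable H a b := by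
  obtain ⟨φ⟩ := hHG
  have hφ : Function.Injective φ := φ.injective
  intro L hL
  obtain ⟨f, hsub, hcard, hdisj⟩ := hG (Function.extend φ L fun _ ↦ range a) fun x ↦ by
    by_cases hx : ∃ y, φ y = x
    · obtain ⟨y, rfl⟩ := hx
      rw [hφ.extend_apply, hL]
    · rw [Function.extend_apply' _ _ _ hx, card_range]
  exact ⟨f ∘ φ, fun y ↦ hφ.extend_apply L _ y ▸ hsub (φ y), fun y ↦ hcard (φ y),
    fun _ _ h ↦ hdisj (φ.toHom.map_adj h)⟩

def Path3Extendable (b : ℕ) (S La Lb T : Finset ℕ) : Prop :=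
  ∃ A ∈ La.powersetCard b, ∃ B ∈ Lb.powersetCard b, Disjoint S A ∧ Disjoint A B ∧ Disjoint B T

instance (b : ℕ) (S La Lb T : Finset ℕ) : Decidable (Path3Extendable b S La Lb T) :=
  inferInstanceAs (Decidable (∃ _ ∈ _, _))

theorem IsTupleListColoring.path3Extendable {V : Type*} {G : SimpleGraph V} {L : V → Finset ℕ}
    {b : ℕ} {f : V → Finset ℕ} (hf : IsTupleListColoring G L b f) {x y z w : V}
    (hxy : G.Adj x y) (hyz : G.Adj y z) (hzw : G.Adj z w) :
    Path3Extendable b (f x) (L y) (L z) (f w) :=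
  ⟨f y, mem_powersetCard.2 ⟨hf.1 y, hf.2.1 y⟩, f z, mem_powersetCard.2 ⟨hf.1 z, hf.2.1 z⟩,
    hf.2.2 hxy, hf.2.2 hyz, hf.2.2 hzw⟩

theorem exists_not_path3Extendable :
    ∀ S ∈ ({0, 1, 2, 3} : Finset ℕ).powersetCard 2, ∀ T ∈ ({0, 1, 2, 3} : Finset ℕ).powersetCard 2,
      ¬ Path3Extendable 2 S {0, 1, 2, 4} {0, 1, 3, 4} T ∨
      ¬ Path3Extendable 2 S {0, 1, 3, 4} {0, 2, 3, 4} T ∨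
      ¬ Path3Extendable 2 S {0, 2, 3, 4} {0, 1, 2, 4} T := by
  decide

def theta333 : SimpleGraph (Fin 8) :=
  fromEdgeSet {s(0, 1), s(1, 2), s(2, 3), s(0, 4), s(4, 5), s(5, 3), s(0, 6), s(6, 7), s(7, 3)}

def theta333Lists : Fin 8 → Finset ℕ :=
  ![{0, 1, 2, 3}, {0, 1, 2, 4}, {0, 1, 3, 4}, {0, 1, 2, 3},
    {0, 1, 3, 4}, {0, 2, 3, 4}, {0, 2, 3, 4}, {0, 1, 2, 4}]

theorem not_listColorable_theta333 : ¬ ListColorable theta333 theta333Lists 2 := by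
  rintro ⟨f, hf⟩
  have hf' : ∀ i, f i ∈ (theta333Lists i).powersetCard 2 :=
    fun i ↦ mem_powersetCard.2 ⟨hf.1 i, hf.2.1 i⟩
  rcases exists_not_path3Extendable (f 0) (hf' 0) (f 3) (hf' 3) with h | h | h
  · refine h (hf.path3Extendable (y := 1) (z := 2) ?_ ?_ ?_) <;> simp [theta333]
  · refine h (hf.path3Extendable (y := 4) (z := 5) ?_ ?_ ?_) <;> simp [theta333]
  · refine h (hf.path3Extendable (y := 6) (z := 7) ?_ ?_ ?_) <;> simp [theta333]

theorem not_choosable_theta333 : ¬ Choosable theta333 4 2 :=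
  fun h ↦ not_listColorable_theta333 (h theta333Lists (by decide))

theorem SimpleGraph.Walk.exists_eq_cons_cons_cons_nil {V : Type*} {G : SimpleGraph V} {u v : V}
    (P : G.Walk u v) (h : P.length = 3) :
    ∃ (a b : V) (hua : G.Adj u a) (hab : G.Adj a b) (hbv : G.Adj b v),
      P = cons hua (cons hab (cons hbv nil)) := by
  match P, h with
  | cons hua (cons hab (cons hbv nil)), _ => exact ⟨_, _, hua, hab, hbv, rfl⟩

theorem IsThetaGraph.theta333_isContained {V : Type*} {G : SimpleGraph V} {u v : V}
    (hG : IsThetaGraph G u v 3 3 3) : theta333 ⊑ G := by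
  obtain ⟨-, P, Q, R, hP, hQ, hR, hPl, hQl, hRl, hPQ, hPR, hQR, -, -⟩ := hG
  obtain ⟨a₁, a₂, hua₁, ha₁₂, ha₂v, rfl⟩ := P.exists_eq_cons_cons_cons_nil hPl
  obtain ⟨b₁, b₂, hub₁, hb₁₂, hb₂v, rfl⟩ := Q.exists_eq_cons_cons_cons_nil hQl
  obtain ⟨c₁, c₂, huc₁, hc₁₂, hc₂v, rfl⟩ := R.exists_eq_cons_cons_cons_nil hRl
  let φ : Fin 8 → V := ![u, a₁, a₂, v, b₁, b₂, c₁, c₂]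
  have hφ : φ.Injective := by
    have hP := hP.support_nodup
    have hQ := hQ.support_nodup
    have hR := hR.support_nodup
    -- the paths meet only at `u` and `v`, so their interior vertices are pairwise distinct
    have ha₁ := hPQ a₁; have ha₂ := hPQ a₂; have ha₁' := hPR a₁; have ha₂' := hPR a₂
    have hb₁ := hQR b₁; have hb₂ := hQR b₂
    rw [← List.nodup_ofFn]
    simp only [φ, List.ofFn_succ, List.ofFn_zero, Matrix.cons_val_zero, Matrix.cons_val_succ,
      Walk.support_cons, Walk.support_nil, List.nodup_cons, List.mem_cons, List.not_mem_nil,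
      or_false, not_or, List.nodup_nil] at *
    grind
  have hle : theta333 ≤ G.comap φ := by
    simp only [theta333, fromEdgeSet_le, Set.sdiff_subset_iff, Set.insert_subset_iff,
      Set.singleton_subset_iff, Set.mem_union, Sym2.mem_diagSet, Sym2.mk_isDiag_iff, Fin.reduceEq,
      false_or, mem_edgeSet, comap_adj, φ, Matrix.cons_val]
    exact ⟨hua₁, ha₁₂, ha₂v, hub₁, hb₁₂, hb₂v, huc₁, hc₁₂, hc₂v⟩
  exact ⟨⟨⟨φ, fun h ↦ hle h⟩, hφ⟩⟩

/-- `Θ_{3,3,3}` is not `(4:2)`-choosable: it admits a list assignment with lists of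
size 4 for which there is no 2-tuple list colouring. -/
theorem theta333_not_choosable (V : Type) (G : SimpleGraph V) (u v : V)
    (hG : IsThetaGraph G u v 3 3 3) :
    ∃ L : V → Finset ℕ, (∀ x, (L x).card = 4) ∧ ¬ ListColorable G L 2 := by
  have h : ¬ Choosable G 4 2 := fun hch ↦
    not_choosable_theta333 (hch.of_isContained hG.theta333_isContained)
  simpa [Choosable] using h
end

section
/- For all integers r, s, t ≥ 1, the theta graph Θ_{2r+1,2s+1,2t+1} is not (4:2)-choosable. -/
/-!
Give `u` and `v` the list `{0,1,2,3}`. On each path, every interior vertex gets the same list `A`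
except the neighbour of `v`, which gets `B`, where `(A, B)` is `({0,1,2,4}, {0,1,3,4})`,
`({0,1,3,4}, {0,2,3,4})` and `({0,2,3,4}, {0,1,2,4})` on the three paths. Disjoint `2`-subsets of a
`4`-set are complementary, so along the odd run of `A`-vertices the colour sets alternate and the
last equals the first: each path behaves like a path of length `3`. A finite check shows that no
pair of colour sets at `u` and `v` extends along all three.
-/

open SimpleGraph

theorem Finset.eq_sdiff_of_subset_of_disjoint {α : Type*} [DecidableEq α] {A S T : Finset α}
    (hS : S ⊆ A) (hT : T ⊆ A) (hST : Disjoint S T) (hcard : A.card ≤ S.card + T.card) :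
    T = A \ S := by
  refine Finset.eq_of_subset_of_card_le (Finset.subset_sdiff.mpr ⟨hT, hST.symm⟩) ?_
  rw [Finset.card_sdiff_of_subset hS]
  omega

theorem SimpleGraph.Walk.IsPath.apply_getVert_of_interior {V α : Type*} [DecidableEq V]
    {G : SimpleGraph V} {u v : V} {W : G.Walk u v} (hW : W.IsPath) {g : V → α} {A B : α}
    (hg : ∀ x ∈ W.support, x ≠ u → x ≠ v → g x = if x = W.penultimate then B else A)
    {i : ℕ} (hi₀ : 0 < i) (hi : i < W.length) :
    g (W.getVert i) = if i = W.length - 1 then B else A := by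
  have hpen : W.getVert i = W.penultimate ↔ i = W.length - 1 :=
    hW.getVert_injOn.eq_iff (by simp only [Set.mem_ofPred_eq]; omega)
      (by simp only [Set.mem_ofPred_eq]; omega)
  rw [hg _ (W.getVert_mem_support i) (by rw [Ne, hW.getVert_eq_start_iff hi.le]; omega)
    (by rw [Ne, hW.getVert_eq_end_iff hi.le]; omega)]
  exact if_congr hpen rfl rfl

/-- The path `x₀x₁x₂x₃` with ends precoloured by `X` and `Y` has a `b`-tuple colouring from the
lists `A` at `x₁` and `B` at `x₂`. -/
def Path3Extends (b : ℕ) (X A B Y : Finset ℕ) : Prop :=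
  ∃ S ∈ A.powersetCard b, ∃ T ∈ B.powersetCard b, Disjoint X S ∧ Disjoint S T ∧ Disjoint T Y

namespace IsTupleListColoring

variable {V : Type*} {G : SimpleGraph V} {L : V → Finset ℕ} {b : ℕ} {f : V → Finset ℕ}
  {u v : V} {W : G.Walk u v} {A B : Finset ℕ}

theorem disjoint_getVert_succ (hf : IsTupleListColoring G L b f) {i : ℕ} (hi : i < W.length) :
    Disjoint (f (W.getVert i)) (f (W.getVert (i + 1))) :=
  hf.2.2 (W.adj_getVert_succ hi)

/-- Inside a list of size `2b`, disjoint `b`-sets are complementary, so colours alternate. -/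
theorem getVert_add_two_eq (hf : IsTupleListColoring G L b f) (hA : A.card = 2 * b) {i : ℕ}
    (hL : ∀ j, i ≤ j → j ≤ i + 2 → L (W.getVert j) = A) (hi : i + 2 ≤ W.length) :
    f (W.getVert (i + 2)) = f (W.getVert i) := by
  have hsub : ∀ j, i ≤ j → j ≤ i + 2 → f (W.getVert j) ⊆ A := fun j h₁ h₂ ↦
    hL j h₁ h₂ ▸ hf.1 _
  have hcard : ∀ j, A.card ≤ (f (W.getVert j)).card + (f (W.getVert (j + 1))).card := by
    intro j; rw [hf.2.1, hf.2.1, hA]; omega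
  have h₁ := Finset.eq_sdiff_of_subset_of_disjoint (hsub i le_rfl (by omega))
    (hsub (i + 1) (by omega) (by omega)) (hf.disjoint_getVert_succ (by omega)) (hcard i)
  have h₂ := Finset.eq_sdiff_of_subset_of_disjoint (hsub (i + 1) (by omega) (by omega))
    (hsub (i + 2) (by omega) le_rfl) (hf.disjoint_getVert_succ (by omega)) (hcard (i + 1))
  rw [h₂, h₁, Finset.sdiff_sdiff_eq_self (hsub i le_rfl (by omega))]

theorem getVert_add_two_mul_eq (hf : IsTupleListColoring G L b f) (hA : A.card = 2 * b)
    {i k : ℕ} (hL : ∀ j, i ≤ j → j ≤ i + 2 * k → L (W.getVert j) = A)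
    (hk : i + 2 * k ≤ W.length) :
    f (W.getVert (i + 2 * k)) = f (W.getVert i) := by
  induction k with
  | zero => rfl
  | succ k ih =>
    rw [← ih (fun j h₁ h₂ ↦ hL j h₁ (by omega)) (by omega),
      show i + 2 * (k + 1) = i + 2 * k + 2 by ring]
    exact hf.getVert_add_two_eq hA (fun j h₁ h₂ ↦ hL j (by omega) (by omega)) (by omega)

theorem path3Extends_of_walk (hf : IsTupleListColoring G L b f) (hA : A.card = 2 * b) {m : ℕ}
    (hm : 0 < m) (hlen : W.length = 2 * m + 1)
    (hLA : ∀ i, 0 < i → i < 2 * m → L (W.getVert i) = A) (hLB : L (W.getVert (2 * m)) = B) :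
    Path3Extends b (f u) A B (f v) := by
  have hS : f (W.getVert (2 * m - 1)) = f (W.getVert 1) := by
    simpa only [show 1 + 2 * (m - 1) = 2 * m - 1 by omega] using
      hf.getVert_add_two_mul_eq (i := 1) (k := m - 1) hA
        (fun j h₁ h₂ ↦ hLA j (by omega) (by omega)) (by omega)
  refine ⟨f (W.getVert 1),
    Finset.mem_powersetCard.mpr ⟨hLA 1 (by omega) (by omega) ▸ hf.1 _, hf.2.1 _⟩,
    f (W.getVert (2 * m)), Finset.mem_powersetCard.mpr ⟨hLB ▸ hf.1 _, hf.2.1 _⟩, ?_, ?_, ?_⟩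
  · simpa using hf.disjoint_getVert_succ (W := W) (i := 0) (by omega)
  · simpa [← hS, show 2 * m - 1 + 1 = 2 * m by omega] using
      hf.disjoint_getVert_succ (W := W) (i := 2 * m - 1) (by omega)
  · simpa [← hlen] using hf.disjoint_getVert_succ (W := W) (i := 2 * m) (by omega)

theorem path3Extends_of_isPath [DecidableEq V] (hf : IsTupleListColoring G L b f)
    (hA : A.card = 2 * b) (hW : W.IsPath) {m : ℕ} (hm : 0 < m) (hlen : W.length = 2 * m + 1)
    (hL : ∀ x ∈ W.support, x ≠ u → x ≠ v → L x = if x = W.penultimate then B else A) :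
    Path3Extends b (f u) A B (f v) := by
  have hLi := fun i (hi₀ : 0 < i) (hi : i < 2 * m + 1) ↦
    hW.apply_getVert_of_interior hL hi₀ (hlen ▸ hi)
  refine hf.path3Extends_of_walk hA hm hlen (fun i hi₀ hi ↦ ?_) ?_
  · rw [hLi i hi₀ (by omega), if_neg (by omega)]
  · rw [hLi (2 * m) (by omega) (by omega), if_pos (by omega)]

end IsTupleListColoring

section Theta

variable {V : Type*} [DecidableEq V] {G : SimpleGraph V} {u v : V} (P Q R : G.Walk u v)

def thetaLists (x : V) : Finset ℕ :=
  if x = u ∨ x = v then {0, 1, 2, 3}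
  else if x ∈ P.support then (if x = P.penultimate then {0, 1, 3, 4} else {0, 1, 2, 4})
  else if x ∈ Q.support then (if x = Q.penultimate then {0, 2, 3, 4} else {0, 1, 3, 4})
  else if x = R.penultimate then {0, 1, 2, 4} else {0, 2, 3, 4}

theorem card_thetaLists (x : V) : (thetaLists P Q R x).card = 4 := by
  unfold thetaLists; split_ifs <;> rfl

theorem thetaLists_of_eq_or_eq {x : V} (hx : x = u ∨ x = v) :
    thetaLists P Q R x = {0, 1, 2, 3} :=
  if_pos hx

theorem thetaLists_of_mem_left {x : V} (hxP : x ∈ P.support) (hu : x ≠ u) (hv : x ≠ v) :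
    thetaLists P Q R x = if x = P.penultimate then {0, 1, 3, 4} else {0, 1, 2, 4} := by
  rw [thetaLists, if_neg (by tauto), if_pos hxP]

theorem thetaLists_of_mem_middle {x : V} (hxP : x ∉ P.support) (hxQ : x ∈ Q.support)
    (hu : x ≠ u) (hv : x ≠ v) :
    thetaLists P Q R x = if x = Q.penultimate then {0, 2, 3, 4} else {0, 1, 3, 4} := by
  rw [thetaLists, if_neg (by tauto), if_neg hxP, if_pos hxQ]

theorem thetaLists_of_mem_right {x : V} (hxP : x ∉ P.support) (hxQ : x ∉ Q.support)
    (hu : x ≠ u) (hv : x ≠ v) :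
    thetaLists P Q R x = if x = R.penultimate then {0, 1, 2, 4} else {0, 2, 3, 4} := by
  rw [thetaLists, if_neg (by tauto), if_neg hxP, if_neg hxQ]

end Theta

theorem not_path3Extends_theta :
    ∀ X ∈ ({0, 1, 2, 3} : Finset ℕ).powersetCard 2,
      ∀ Y ∈ ({0, 1, 2, 3} : Finset ℕ).powersetCard 2,
        ¬ (Path3Extends 2 X {0, 1, 2, 4} {0, 1, 3, 4} Y ∧
          Path3Extends 2 X {0, 1, 3, 4} {0, 2, 3, 4} Y ∧
          Path3Extends 2 X {0, 2, 3, 4} {0, 1, 2, 4} Y) := by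
  unfold Path3Extends; decide

/-- For all `r, s, t ≥ 1`, the theta graph `Θ_{2r+1,2s+1,2t+1}` is not `(4:2)`-choosable. -/
theorem theta_odd_not_choosable (r s t : ℕ) (hr : 1 ≤ r) (hs : 1 ≤ s) (ht : 1 ≤ t)
    (V : Type) (G : SimpleGraph V) (u v : V)
    (hG : IsThetaGraph G u v (2 * r + 1) (2 * s + 1) (2 * t + 1)) :
    ¬ Choosable G 4 2 := by
  classical
  obtain ⟨-, P, Q, R, hP, hQ, hR, hPl, hQl, hRl, hPQ, hPR, hQR, -, -⟩ := hG
  intro hCh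
  obtain ⟨f, hf⟩ := hCh (thetaLists P Q R) (card_thetaLists P Q R)
  have hends : ∀ x, x = u ∨ x = v → f x ∈ ({0, 1, 2, 3} : Finset ℕ).powersetCard 2 := fun x hx ↦
    Finset.mem_powersetCard.mpr ⟨thetaLists_of_eq_or_eq P Q R hx ▸ hf.1 x, hf.2.1 x⟩
  refine not_path3Extends_theta _ (hends u (.inl rfl)) _ (hends v (.inr rfl))
    ⟨hf.path3Extends_of_isPath (by rfl) hP hr hPl fun x hxP hu hv ↦ ?_,
      hf.path3Extends_of_isPath (by rfl) hQ hs hQl fun x hxQ hu hv ↦ ?_,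
      hf.path3Extends_of_isPath (by rfl) hR ht hRl fun x hxR hu hv ↦ ?_⟩
  · exact thetaLists_of_mem_left P Q R hxP hu hv
  · exact thetaLists_of_mem_middle P Q R (fun hxP ↦ (hPQ x hxP hxQ).elim hu hv) hxQ hu hv
  · exact thetaLists_of_mem_right P Q R (fun hxP ↦ (hPR x hxP hxR).elim hu hv)
      (fun hxQ ↦ (hQR x hxQ hxR).elim hu hv) hu hv
end

section
/- For all integers r, s, t ≥ 2, the theta graph Θ_{2r,2s,2t} is not (4:2)-choosable. -/
/-!
Give every vertex the list `{1,2,3,4}`, except the last two inner vertices of the three paths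
from `u` to `v`, which get lists obtained from `{1,2,3,4}` by trading one colour for `5`.
On a stretch of a path where all lists equal `{1,2,3,4}`, a `2`-tuple colouring alternates
between `f u` and its complement, so on each path, having even length, the vertex at distance `3`
from `v` is coloured `{1,2,3,4} \ f u`. A finite check shows that no choice of `f u` and `f v`
lets all three remaining segments be completed.
-/

open SimpleGraph Finset

theorem Finset.eq_sdiff_of_disjoint_of_card_le {α : Type*} [DecidableEq α] {U C D : Finset α}
    (hC : C ⊆ U) (hD : D ⊆ U) (hCD : Disjoint C D) (hcard : #U ≤ #C + #D) : D = U \ C :=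
  eq_of_subset_of_card_le (subset_sdiff.mpr ⟨hD, hCD.symm⟩) (by rw [card_sdiff_of_subset hC]; omega)

/-- `A` and `B` colour the ends of a path with three edges whose inner vertices have lists `N`, `O`,
and this extends to a `b`-tuple colouring of the path. -/
def ExtendsThroughLists (b : ℕ) (A N O B : Finset ℕ) : Prop :=
  ∃ C ∈ N.powersetCard b, ∃ D ∈ O.powersetCard b, Disjoint A C ∧ Disjoint C D ∧ Disjoint D B

theorem not_extendsThroughLists_all_three :
    ∀ A ∈ ({1, 2, 3, 4} : Finset ℕ).powersetCard 2, ∀ B ∈ ({1, 2, 3, 4} : Finset ℕ).powersetCard 2,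
      ¬ (ExtendsThroughLists 2 ({1, 2, 3, 4} \ A) {1, 2, 3, 5} {1, 2, 4, 5} B ∧
        ExtendsThroughLists 2 ({1, 2, 3, 4} \ A) {1, 2, 4, 5} {1, 3, 4, 5} B ∧
        ExtendsThroughLists 2 ({1, 2, 3, 4} \ A) {1, 3, 4, 5} {1, 2, 3, 5} B) := by
  unfold ExtendsThroughLists
  decide

namespace SimpleGraph.Walk

variable {V β : Type*} [DecidableEq V] {G : SimpleGraph V} {u v : V}

def updateTail (p : G.Walk u v) (L : V → β) (N O : β) : V → β :=
  Function.update (Function.update L (p.getVert (p.length - 2)) N) (p.getVert (p.length - 1)) O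

theorem updateTail_apply_congr (p : G.Walk u v) {L L' : V → β} {x : V} (h : L x = L' x)
    (N O : β) : p.updateTail L N O x = p.updateTail L' N O x := by
  simp only [updateTail, Function.update_apply, h]

theorem IsPath.updateTail_apply_getVert {p : G.Walk u v} (hp : p.IsPath) (L : V → β) (N O : β)
    {i : ℕ} (hi : i ≤ p.length) :
    p.updateTail L N O (p.getVert i) =
      if i = p.length - 1 then O else if i = p.length - 2 then N else L (p.getVert i) := by
  have hinj : ∀ j ≤ p.length, p.getVert i = p.getVert j ↔ i = j :=
    fun j hj => hp.getVert_injOn.eq_iff hi hj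
  simp only [updateTail, Function.update_apply, hinj _ (Nat.sub_le _ 1), hinj _ (Nat.sub_le _ 2)]

theorem IsPath.updateTail_apply_of_not_inner {p : G.Walk u v} (hp : p.IsPath) (hp3 : 3 ≤ p.length)
    (L : V → β) (N O : β) {x : V} (hx : x ∈ p.support → x = u ∨ x = v) :
    p.updateTail L N O x = L x := by
  have hne : ∀ i, 0 < i → i < p.length → x ≠ p.getVert i := by
    rintro i hi0 hil rfl
    rcases hx (p.getVert_mem_support i) with h | h
    · exact hi0.ne' ((hp.getVert_eq_start_iff hil.le).mp h)
    · exact hil.ne ((hp.getVert_eq_end_iff hil.le).mp h)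
  rw [updateTail, Function.update_of_ne (hne _ (by omega) (by omega)),
    Function.update_of_ne (hne _ (by omega) (by omega))]

end SimpleGraph.Walk

section TupleColoring

variable {V : Type*} {G : SimpleGraph V} {L f : V → Finset ℕ} {b : ℕ} {U : Finset ℕ}

theorem IsTupleListColoring.eq_sdiff_of_adj (hf : IsTupleListColoring G L b f) (hU : #U = 2 * b)
    {x y : V} (hxy : G.Adj x y) (hx : L x = U) (hy : L y = U) : f y = U \ f x :=
  Finset.eq_sdiff_of_disjoint_of_card_le (hx ▸ hf.1 x) (hy ▸ hf.1 y) (hf.2.2 hxy)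
    (by rw [hf.2.1, hf.2.1, hU]; omega)

theorem IsTupleListColoring.getVert_eq_of_lists_eq (hf : IsTupleListColoring G L b f)
    (hU : #U = 2 * b) {u v : V} (p : G.Walk u v) {m : ℕ} (hm : m ≤ p.length)
    (hL : ∀ i ≤ m, L (p.getVert i) = U) :
    ∀ i ≤ m, f (p.getVert i) = if Even i then f u else U \ f u := by
  have hfu : f u ⊆ U := p.getVert_zero ▸ hL 0 (Nat.zero_le m) ▸ hf.1 (p.getVert 0)
  intro i hi
  induction i with
  | zero => simp
  | succ i ih =>
    rw [hf.eq_sdiff_of_adj hU (p.adj_getVert_succ (by omega)) (hL i (by omega)) (hL (i + 1) hi),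
      ih (by omega)]
    by_cases he : Even i
    · simp [he, Nat.even_add_one]
    · simp [he, Nat.even_add_one, Finset.sdiff_sdiff_eq_self hfu]

theorem IsTupleListColoring.extendsThroughLists [DecidableEq V]
    (hf : IsTupleListColoring G L b f) (hU : #U = 2 * b) {u v : V} {p : G.Walk u v} (hp : p.IsPath)
    (hpe : Even p.length) (hp4 : 4 ≤ p.length) {N O : Finset ℕ}
    (hL : ∀ x ∈ p.support, L x = p.updateTail (fun _ => U) N O x) :
    ExtendsThroughLists b (U \ f u) N O (f v) := by
  have hLi : ∀ i ≤ p.length, L (p.getVert i) =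
      if i = p.length - 1 then O else if i = p.length - 2 then N else U := fun i hi =>
    (hL _ (p.getVert_mem_support i)).trans (hp.updateTail_apply_getVert _ N O hi)
  have hadj : ∀ i j, i < p.length → j = i + 1 → G.Adj (p.getVert i) (p.getVert j) := by
    rintro i _ hi rfl
    exact p.adj_getVert_succ hi
  have hx : f (p.getVert (p.length - 3)) = U \ f u := by
    rw [hf.getVert_eq_of_lists_eq hU p (Nat.sub_le _ 3)
      (fun i hi => by rw [hLi i (by omega), if_neg (by omega), if_neg (by omega)]) _ le_rfl,
      if_neg (by obtain ⟨k, hk⟩ := hpe; rw [Nat.even_iff]; omega)]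
  have hN := hLi (p.length - 2) (by omega)
  have hO := hLi (p.length - 1) (by omega)
  rw [if_neg (by omega), if_pos rfl] at hN
  rw [if_pos rfl] at hO
  refine ⟨_, mem_powersetCard.mpr ⟨hN ▸ hf.1 _, hf.2.1 _⟩, _,
    mem_powersetCard.mpr ⟨hO ▸ hf.1 _, hf.2.1 _⟩, hx ▸ hf.2.2 (hadj _ _ (by omega) (by omega)),
    hf.2.2 (hadj _ _ (by omega) (by omega)), ?_⟩
  simpa using hf.2.2 (hadj (p.length - 1) p.length (by omega) (by omega))

end TupleColoring

/-- For all `r, s, t ≥ 2`, the theta graph `Θ_{2r,2s,2t}` is not `(4:2)`-choosable. -/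
theorem theta_even_not_choosable (r s t : ℕ) (hr : 2 ≤ r) (hs : 2 ≤ s) (ht : 2 ≤ t)
    (V : Type) (G : SimpleGraph V) (u v : V)
    (hG : IsThetaGraph G u v (2 * r) (2 * s) (2 * t)) :
    ¬ Choosable G 4 2 := by
  classical
  obtain ⟨-, P, Q, R, hP, hQ, hR, hPl, hQl, hRl, hPQ, hPR, hQR, -, -⟩ := hG
  intro hch
  set L₀ : V → Finset ℕ := fun _ => {1, 2, 3, 4}
  set L := R.updateTail (Q.updateTail (P.updateTail L₀ {1, 2, 3, 5} {1, 2, 4, 5})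
    {1, 2, 4, 5} {1, 3, 4, 5}) {1, 3, 4, 5} {1, 2, 3, 5} with hL
  have hLP : ∀ x ∈ P.support, L x = P.updateTail L₀ {1, 2, 3, 5} {1, 2, 4, 5} x := fun x hx => by
    rw [hL, hR.updateTail_apply_of_not_inner (by omega) _ _ _ (hPR x hx),
      hQ.updateTail_apply_of_not_inner (by omega) _ _ _ (hPQ x hx)]
  have hLQ : ∀ x ∈ Q.support, L x = Q.updateTail L₀ {1, 2, 4, 5} {1, 3, 4, 5} x := fun x hx => by
    rw [hL, hR.updateTail_apply_of_not_inner (by omega) _ _ _ (hQR x hx),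
      Q.updateTail_apply_congr (hP.updateTail_apply_of_not_inner (by omega) _ _ _ (hPQ x · hx))]
  have hLR : ∀ x ∈ R.support, L x = R.updateTail L₀ {1, 3, 4, 5} {1, 2, 3, 5} x := fun x hx =>
    R.updateTail_apply_congr (by
      rw [hQ.updateTail_apply_of_not_inner (by omega) _ _ _ (hQR x · hx),
        hP.updateTail_apply_of_not_inner (by omega) _ _ _ (hPR x · hx)]) _ _
  obtain ⟨f, hf⟩ := hch L fun x => by
    simp only [hL, L₀, Walk.updateTail, Function.update_apply]
    split_ifs <;> rfl
  have hLu : L u = {1, 2, 3, 4} := (hLP u P.start_mem_support).trans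
    (hP.updateTail_apply_of_not_inner (by omega) _ _ _ fun _ => .inl rfl)
  have hLv : L v = {1, 2, 3, 4} := (hLP v P.end_mem_support).trans
    (hP.updateTail_apply_of_not_inner (by omega) _ _ _ fun _ => .inr rfl)
  exact not_extendsThroughLists_all_three (f u) (mem_powersetCard.mpr ⟨hLu ▸ hf.1 u, hf.2.1 u⟩)
    (f v) (mem_powersetCard.mpr ⟨hLv ▸ hf.1 v, hf.2.1 v⟩)
    ⟨hf.extendsThroughLists rfl hP (hPl ▸ even_two_mul r) (by omega) hLP,
      hf.extendsThroughLists rfl hQ (hQl ▸ even_two_mul s) (by omega) hLQ,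
      hf.extendsThroughLists rfl hR (hRl ▸ even_two_mul t) (by omega) hLR⟩
end

section
/- Let m and n be positive integers, let P be a path with n vertices v_1, …, v_n in order, and let L be a list assignment on P with |L(v_1)| = |L(v_n)| ≥ 2m and |L(v_i)| = 4m for all i with 2 ≤ i ≤ n−1. Then P is (L:2m)-colourable if and only if S_L(P) ≥ 2mn. -/
/-- Given the lists `L(v_1), …, L(v_n)` of a path (as a list of finsets, in order) and a
"previous" set, the sequence `X_1 = L(v_1)`, `X_i = L(v_i) \ X_{i-1}`. -/
def Xseq : Finset ℕ → List (Finset ℕ) → List (Finset ℕ)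
  | _, [] => []
  | prev, l :: ls => (l \ prev) :: Xseq (l \ prev) ls

/-- `S_L(P) = Σ_{i=1}^n |X_i|`. -/
def SL (ls : List (Finset ℕ)) : ℕ := ((Xseq ∅ ls).map Finset.card).sum

/-- `X_{i+1}` (0-indexed access to the sequence `X_1, …, X_n`). -/
def Xat (ls : List (Finset ℕ)) (i : ℕ) : Finset ℕ := (Xseq ∅ ls).getD i ∅

/-- `A = ∩_{x ∈ V(P)} L(x)`. -/
def Aset : List (Finset ℕ) → Finset ℕ
  | [] => ∅
  | a :: rest => rest.foldl (· ∩ ·) a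

/-- For a colour `c`, the least 0-indexed position `i` with `c ∉ L(v_{i+1})`
(so the paper's `f(c)` is `firstMissing + 1`). -/
noncomputable def firstMissing (ls : List (Finset ℕ)) (c : ℕ) : ℕ :=
  sInf {i | i < ls.length ∧ c ∉ ls.getD i ∅}

open Classical in
/-- `X̂_1 = { c ∈ L(v_1) \ A : f(c) is even }` (with the paper's 1-indexed `f`,
i.e. `firstMissing` is odd). -/
noncomputable def hatX1 (ls : List (Finset ℕ)) : Finset ℕ :=
  (ls.getD 0 ∅ \ Aset ls).filter fun c => Odd (firstMissing ls c)

/-- `X̂_n = X_n \ A`. -/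
def hatXn (ls : List (Finset ℕ)) : Finset ℕ := Xat ls (ls.length - 1) \ Aset ls

/-- `L[p,q]`: delete the colours of `p` from `L(v_1)` and the colours of `q` from `L(v_n)`. -/
def delEnds (p q : Finset ℕ) (ls : List (Finset ℕ)) : List (Finset ℕ) :=
  ((ls.modifyHead (· \ p)).reverse.modifyHead (· \ q)).reverse

/-- The damage `dam_{L,P}(p,q) = S_L(P) − S_{L[p,q]}(P)` (as an integer). -/
def damZ (ls : List (Finset ℕ)) (p q : Finset ℕ) : ℤ :=
  (SL ls : ℤ) - SL (delEnds p q ls)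

/-- The path `v_1 ⋯ v_n` with lists `L(v_1), …, L(v_n)` admits a `b`-tuple list
colouring: consecutive vertices receive disjoint `b`-subsets of their lists. -/
def PathListColorable (b : ℕ) (ls : List (Finset ℕ)) : Prop :=
  ∃ f : ℕ → Finset ℕ,
    (∀ i, i < ls.length → f i ⊆ ls.getD i ∅ ∧ (f i).card = b) ∧
    (∀ i, i + 1 < ls.length → Disjoint (f i) (f (i + 1)))

/-! Write `S(p)` for `S_L(P)` computed with the colours `p` forbidden at `v₁`. Forbidding `p`
lowers `S` by exactly `#(p ∩ W)`, where `W = L(v₁) \ (L(v₂) \ (⋯ \ L(vₙ)))`. Hence the best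
`2m` colours for `v₁` contain as few colours of `W` as possible, and colourability of the
path reduces, by induction along it, to a count of `S`. When `2m` colours outside `W` are
available, the remaining condition is `S ≥ 2m(n - 1)` for the tail, which always holds
because its internal lists have `4m` colours. -/

open Finset

section Counting

variable {α : Type*} [DecidableEq α]

theorem Finset.exists_subset_card_eq_card_inter_le {s : Finset α} {b : ℕ} (W : Finset α)
    (hb : b ≤ #s) : ∃ g ⊆ s, #g = b ∧ #(g ∩ W) ≤ b - #(s \ W) := by
  obtain ⟨g₀, hg₀, hg₀card⟩ := exists_subset_card_eq (min_le_right b #(s \ W))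
  obtain ⟨g, hg₀g, hgs, hgcard⟩ :=
    exists_subsuperset_card_eq (hg₀.trans sdiff_subset) (hg₀card.trans_le (min_le_left _ _)) hb
  refine ⟨g, hgs, hgcard, ?_⟩
  have hsub : g ∩ W ⊆ g \ g₀ := fun x hx => by
    rw [mem_inter] at hx
    exact mem_sdiff.2 ⟨hx.1, fun hx₀ => (mem_sdiff.1 (hg₀ hx₀)).2 hx.2⟩
  calc #(g ∩ W) ≤ #(g \ g₀) := card_le_card hsub
    _ = b - #(s \ W) := by rw [card_sdiff_of_subset hg₀g]; omega

/-- The optimal `g` takes as few elements of `W` as possible. -/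
theorem exists_subset_card_eq_le_iff {F : Finset α → ℕ} {W s : Finset α} {b N : ℕ}
    (hF : ∀ g, F g + #(g ∩ W) = F ∅) (hb : b ≤ #s) (hN : N ≤ F ∅) :
    (∃ g ⊆ s, #g = b ∧ N ≤ F g) ↔ N + b ≤ #s + F s := by
  have hs : #s + F s = #(s \ W) + F ∅ := by
    rw [← hF s, ← card_sdiff_add_card_inter s W]; ring
  rw [hs]
  constructor
  · rintro ⟨g, hgs, rfl, hg⟩
    have := hF g
    have := card_sdiff_add_card_inter g W
    have := card_le_card (sdiff_subset_sdiff hgs (le_refl W))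
    omega
  · intro h
    obtain ⟨g, hgs, hgcard, hgW⟩ := exists_subset_card_eq_card_inter_le W hb
    have := hF g
    exact ⟨g, hgs, hgcard, by omega⟩

end Counting

/-- `xsum p ls` is `S_L` of the path with lists `ls` when the colours `p` are already
forbidden at its first vertex. -/
def xsum (p : Finset ℕ) (ls : List (Finset ℕ)) : ℕ := ((Xseq p ls).map Finset.card).sum

@[simp] theorem xsum_nil (p : Finset ℕ) : xsum p [] = 0 := rfl

@[simp] theorem xsum_cons (p l : Finset ℕ) (ls : List (Finset ℕ)) :
    xsum p (l :: ls) = #(l \ p) + xsum (l \ p) ls := by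
  simp [xsum, Xseq]

theorem SL_eq_xsum (ls : List (Finset ℕ)) : SL ls = xsum ∅ ls := rfl

def altSdiff (ls : List (Finset ℕ)) : Finset ℕ := ls.foldr (· \ ·) ∅

theorem xsum_add_card_inter_altSdiff (ls : List (Finset ℕ)) (p : Finset ℕ) :
    xsum p ls + #(p ∩ altSdiff ls) = xsum ∅ ls := by
  induction ls generalizing p with
  | nil => simp [altSdiff]
  | cons l t ih =>
    set W := altSdiff t
    have hW : altSdiff (l :: t) = l \ W := rfl
    have h₁ := ih (l \ p)
    have h₂ := ih l
    have h₃ := card_sdiff_add_card_inter (l \ p) W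
    have h₄ := card_sdiff_add_card_inter (l \ W) p
    have h₅ := card_sdiff_add_card_inter l W
    rw [sdiff_sdiff_comm] at h₃
    rw [inter_comm] at h₄
    simp only [xsum_cons, sdiff_empty, hW] at *
    omega

def PathShape (m : ℕ) : List (Finset ℕ) → Prop
  | [] => True
  | [l] => 2 * m ≤ #l
  | l :: l' :: ls => #l = 4 * m ∧ PathShape m (l' :: ls)

theorem xsum_lower_bound {m : ℕ} {ls : List (Finset ℕ)} (hls : PathShape m ls)
    (p : Finset ℕ) : 2 * m * ls.length ≤ xsum p ls + min #p (2 * m) := by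
  induction ls generalizing p with
  | nil => simp
  | cons l t ih =>
    have hl := card_le_card_sdiff_add_card (s := l) (t := p)
    rcases t with _ | ⟨l', t⟩
    · simp only [PathShape] at hls
      simp only [xsum_cons, xsum_nil, List.length_singleton]
      omega
    · obtain ⟨hl4, ht⟩ := hls
      have := ih ht (l \ p)
      simp only [xsum_cons, List.length_cons, mul_add, mul_one] at this ⊢
      omega

def ColorableAvoiding (b : ℕ) : Finset ℕ → List (Finset ℕ) → Prop
  | _, [] => True
  | p, l :: ls => ∃ f ⊆ l \ p, #f = b ∧ ColorableAvoiding b f ls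

theorem colorableAvoiding_iff (b : ℕ) (ls : List (Finset ℕ)) (p : Finset ℕ) :
    ColorableAvoiding b p ls ↔ ∃ f : ℕ → Finset ℕ,
      (∀ i, i < ls.length → f i ⊆ ls.getD i ∅ ∧ #(f i) = b) ∧
      (∀ i, i + 1 < ls.length → Disjoint (f i) (f (i + 1))) ∧
      (0 < ls.length → Disjoint p (f 0)) := by
  induction ls generalizing p with
  | nil => simp [ColorableAvoiding]
  | cons l t ih =>
    simp only [ColorableAvoiding, ih, subset_sdiff, List.length_cons]
    constructor
    · rintro ⟨g, ⟨hgl, hgp⟩, hg, f, hf, hdisj, hgf⟩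
      refine ⟨fun i => Nat.casesOn i g f, ?_, ?_, fun _ => hgp.symm⟩
      · rintro (_ | i) hi
        · exact ⟨hgl, hg⟩
        · exact hf i (by omega)
      · rintro (_ | i) hi
        · exact hgf (by omega)
        · exact hdisj i (by omega)
    · rintro ⟨f, hf, hdisj, hpf⟩
      refine ⟨f 0, ⟨(hf 0 (by omega)).1, (hpf (by omega)).symm⟩, (hf 0 (by omega)).2,
        fun i => f (i + 1), fun i hi => hf (i + 1) (by omega),
        fun i hi => hdisj (i + 1) (by omega), fun _ => hdisj 0 (by omega)⟩

theorem pathListColorable_iff_colorableAvoiding (b : ℕ) (ls : List (Finset ℕ)) :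
    PathListColorable b ls ↔ ColorableAvoiding b ∅ ls := by
  simp [colorableAvoiding_iff, PathListColorable]

theorem colorableAvoiding_cons_iff_of_tail {m : ℕ} {l p : Finset ℕ} {t : List (Finset ℕ)}
    (ht : PathShape m t)
    (hcol : ∀ g : Finset ℕ, #g = 2 * m →
      (ColorableAvoiding (2 * m) g t ↔ 2 * m * t.length ≤ xsum g t))
    (hlp : 2 * m ≤ #(l \ p)) :
    ColorableAvoiding (2 * m) p (l :: t) ↔ 2 * m * (l :: t).length ≤ xsum p (l :: t) := by
  have hN : 2 * m * t.length ≤ xsum ∅ t := by simpa using xsum_lower_bound ht ∅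
  calc ColorableAvoiding (2 * m) p (l :: t)
      ↔ ∃ g ⊆ l \ p, #g = 2 * m ∧ 2 * m * t.length ≤ xsum g t := by
        simp only [ColorableAvoiding]
        exact exists_congr fun g => and_congr_right fun _ => and_congr_right (hcol g)
    _ ↔ 2 * m * t.length + 2 * m ≤ #(l \ p) + xsum (l \ p) t :=
        exists_subset_card_eq_le_iff (xsum_add_card_inter_altSdiff t) hlp hN
    _ ↔ 2 * m * (l :: t).length ≤ xsum p (l :: t) := by
        rw [xsum_cons, List.length_cons, mul_add, mul_one]

theorem colorableAvoiding_iff_le_xsum {m : ℕ} {ls : List (Finset ℕ)} (hls : PathShape m ls)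
    {p : Finset ℕ} (hp : #p ≤ 2 * m) :
    ColorableAvoiding (2 * m) p ls ↔ 2 * m * ls.length ≤ xsum p ls := by
  induction ls generalizing p with
  | nil => simp [ColorableAvoiding]
  | cons l t ih =>
    rcases t with _ | ⟨l', t⟩
    · simp only [ColorableAvoiding, and_true, xsum_cons, xsum_nil, List.length_singleton,
        mul_one, add_zero]
      exact ⟨fun ⟨g, hg, hgcard⟩ => hgcard ▸ card_le_card hg, exists_subset_card_eq⟩
    · obtain ⟨hl, ht⟩ := hls
      refine colorableAvoiding_cons_iff_of_tail ht (fun g hg => ih ht hg.le) ?_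
      have := card_le_card_sdiff_add_card (s := l) (t := p)
      omega

theorem pathShape_of_getD {m : ℕ} {ls : List (Finset ℕ)}
    (hmid : ∀ i, i + 1 < ls.length → #(ls.getD i ∅) = 4 * m)
    (hlast : ls ≠ [] → 2 * m ≤ #(ls.getD (ls.length - 1) ∅)) : PathShape m ls := by
  induction ls with
  | nil => trivial
  | cons l t ih =>
    rcases t with _ | ⟨l', t⟩
    · simpa [PathShape] using hlast
    · refine ⟨hmid 0 (by simp), ih (fun i hi => ?_) (fun _ => ?_)⟩
      · simpa using hmid (i + 1) (by simpa using hi)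
      · simpa using hlast (by simp)

theorem path_colorable_iff_SL_general (m n : ℕ)
    (ls : List (Finset ℕ)) (hlen : ls.length = n)
    (hends : (ls.getD 0 ∅).card = (ls.getD (n - 1) ∅).card)
    (hfirst : 2 * m ≤ (ls.getD 0 ∅).card)
    (hmid : ∀ i, 0 < i → i + 1 < n → (ls.getD i ∅).card = 4 * m) :
    PathListColorable (2 * m) ls ↔ 2 * m * n ≤ SL ls := by
  subst hlen
  rw [pathListColorable_iff_colorableAvoiding, SL_eq_xsum]
  rcases ls with _ | ⟨l, t⟩
  · simp [ColorableAvoiding]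
  have ht : PathShape m t := by
    refine pathShape_of_getD (fun i hi => ?_) (fun hne => ?_)
    · simpa using hmid (i + 1) (by omega) (by simpa using hi)
    · have hlast : (l :: t).getD ((l :: t).length - 1) ∅ = t.getD (t.length - 1) ∅ := by
        obtain ⟨k, hk⟩ := Nat.exists_eq_succ_of_ne_zero (List.length_pos_iff.2 hne).ne'
        simp [hk]
      rw [← hlast, ← hends]
      exact hfirst
  exact colorableAvoiding_cons_iff_of_tail ht (fun g hg => colorableAvoiding_iff_le_xsum ht hg.le)
    (by simpa using hfirst)

/-- Lemma 1 (Lemma `lem:xuding`): for a path `P` on `n` vertices whose endpoint lists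
have equal size `≥ 2m` and whose internal lists have size `4m`, `P` is
`(L:2m)`-colourable iff `S_L(P) ≥ 2mn`. -/
theorem path_colorable_iff_SL (m n : ℕ) (hm : 0 < m) (hn : 0 < n)
    (ls : List (Finset ℕ)) (hlen : ls.length = n)
    (hends : (ls.getD 0 ∅).card = (ls.getD (n - 1) ∅).card)
    (hfirst : 2 * m ≤ (ls.getD 0 ∅).card)
    (hmid : ∀ i, 0 < i → i + 1 < n → (ls.getD i ∅).card = 4 * m) :
    PathListColorable (2 * m) ls ↔ 2 * m * n ≤ SL ls :=
  path_colorable_iff_SL_general m n ls hlen hends hfirst hmid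
end

section
/- Let L be a list assignment on a path P with an odd number n of vertices v_1, …, v_n. Then for any finite sets of colours p and q, S_{L[p,q]}(P) = S_L(P) − ( |(A ∪ X̂_1) ∩ p| + |(A ∪ X̂_n) ∩ q| − |A ∩ p ∩ q| ). -/
/-!
Everything happens one colour at a time. For a colour `c` let `b_i` say whether `c ∈ L(v_i)`;
then `c ∈ X_i` iff `x_i`, where `x_1 = b_1` and `x_i = b_i ∧ ¬x_{i-1}`, so `S_L(P)` is the sum
over colours of the number of true `x_i`. Along a maximal run of `true`s among the `b_i` the `x_i`
alternate, starting with `true`. Deleting `c` from `L(v_1)` shortens the initial run, of length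
`f(c) - 1`, and loses one true `x_i` iff that length is odd; deleting `c` from `L(v_n)` loses one
iff `x_n` holds. When `n` is odd the two deletions do not interact unless `c ∈ A`, i.e. the whole
path is a single run, and then together they cost one instead of two.
-/

open Finset

lemma List.map_modifyHead_of_comm {α β : Type*} {f : α → β} {g : α → α} {g' : β → β}
    (h : ∀ a, f (g a) = g' (f a)) (l : List α) :
    (l.modifyHead g).map f = (l.map f).modifyHead g' := by
  cases l <;> simp [h]

lemma List.forall_mem_modifyHead {α : Type*} {P : α → Prop} {g : α → α}
    (hg : ∀ a, P a → P (g a)) {l : List α} (hl : ∀ a ∈ l, P a) :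
    ∀ a ∈ l.modifyHead g, P a := by
  cases l with
  | nil => simp
  | cons a l => simpa using And.intro (hg a (hl a (by simp))) fun b hb => hl b (by simp [hb])

lemma List.getD_length_sub_one {α : Type*} (l : List α) (d : α) :
    l.getD (l.length - 1) d = l.getLastD d := by
  rw [List.getD_eq_getElem?_getD, ← List.getLast?_eq_getElem?, List.getLastD_eq_getLast?]

lemma Finset.card_eq_sum_ite_mem {α : Type*} [DecidableEq α] {S U : Finset α} (h : S ⊆ U) :
    #S = ∑ c ∈ U, if c ∈ S then 1 else 0 := by
  rw [Finset.sum_boole, Finset.filter_mem_eq_inter, Finset.inter_eq_right.mpr h, Nat.cast_id]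

lemma Finset.sum_card_eq_sum_count {α : Type*} [DecidableEq α] {U : Finset α}
    {ms : List (Finset α)} (h : ∀ m ∈ ms, m ⊆ U) :
    (ms.map Finset.card).sum = ∑ c ∈ U, (ms.map fun m => decide (c ∈ m)).count true := by
  induction ms with
  | nil => simp
  | cons m ms ih =>
    simp only [List.mem_cons, forall_eq_or_imp] at h
    rw [List.map_cons, List.sum_cons, ih h.2, Finset.card_eq_sum_ite_mem h.1,
      ← Finset.sum_add_distrib]
    simp [List.count_cons, add_comm]

lemma Finset.mem_foldl_inter {α : Type*} [DecidableEq α] {c : α} (ls : List (Finset α))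
    (a : Finset α) : c ∈ ls.foldl (· ∩ ·) a ↔ c ∈ a ∧ ∀ l ∈ ls, c ∈ l := by
  induction ls generalizing a with
  | nil => simp
  | cons l ls ih => simp [ih, and_assoc]

def xSeq : Bool → List Bool → List Bool
  | _, [] => []
  | prev, b :: bs => (b && !prev) :: xSeq (b && !prev) bs

def xLast (prev : Bool) (bs : List Bool) : Bool := (xSeq prev bs).getLastD prev

@[simp] lemma xSeq_nil (prev : Bool) : xSeq prev [] = [] := rfl

@[simp] lemma xSeq_cons (prev b : Bool) (bs : List Bool) :
    xSeq prev (b :: bs) = (b && !prev) :: xSeq (b && !prev) bs := rfl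

@[simp] lemma xLast_nil (prev : Bool) : xLast prev [] = prev := rfl

@[simp] lemma xLast_cons (prev b : Bool) (bs : List Bool) :
    xLast prev (b :: bs) = xLast (b && !prev) bs := by
  simp only [xLast, xSeq_cons, List.getLastD_cons]

lemma xSeq_append_singleton (prev b : Bool) (bs : List Bool) :
    xSeq prev (bs ++ [b]) = xSeq prev bs ++ [b && !xLast prev bs] := by
  induction bs generalizing prev with
  | nil => simp
  | cons a bs ih => simp [ih]

lemma xLast_append_singleton (prev b : Bool) (bs : List Bool) :
    xLast prev (bs ++ [b]) = (b && !xLast prev bs) := by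
  rw [xLast, xSeq_append_singleton, List.getLastD_concat]

lemma count_xSeq_false (bs : List Bool) :
    (xSeq false bs).count true =
      (xSeq true bs).count true + if Odd (bs.findIdx not) then 1 else 0 := by
  induction bs with
  | nil => simp
  | cons b bs ih =>
    cases b
    · simp [List.findIdx_cons]
    · simp only [xSeq_cons, List.count_cons, List.findIdx_cons, Bool.not_true, Bool.and_false,
        Bool.not_false, Bool.and_self]
      rw [ih]
      by_cases h : Odd (bs.findIdx not) <;> simp [Nat.odd_add_one, h]

lemma count_xSeq_modifyHead (α : Bool) (bs : List Bool) :
    (xSeq false bs).count true =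
      (xSeq false (bs.modifyHead (· && !α))).count true +
        if Odd (bs.findIdx not) ∧ α then 1 else 0 := by
  match α, bs with
  | false, bs => cases bs <;> simp
  | true, [] => simp
  | true, false :: bs => simp [List.findIdx_cons]
  | true, true :: bs =>
    simp only [List.modifyHead_cons, xSeq_cons, List.count_cons, List.findIdx_cons, Bool.and_true,
      Bool.not_true, Bool.and_false, Bool.not_false, Bool.and_self]
    rw [count_xSeq_false bs]
    by_cases h : Odd (bs.findIdx not) <;> simp [Nat.odd_add_one, h]

lemma count_xSeq_modifyLast (β : Bool) (bs : List Bool) :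
    (xSeq false bs).count true =
      (xSeq false (bs.reverse.modifyHead (· && !β)).reverse).count true +
        if xLast false bs ∧ β then 1 else 0 := by
  rcases List.eq_nil_or_concat bs with rfl | ⟨bs, b, rfl⟩
  · simp
  · simp only [List.concat_eq_append, List.reverse_append, List.reverse_cons, List.reverse_nil,
      List.nil_append, List.modifyHead_cons, List.reverse_reverse, List.singleton_append,
      xSeq_append_singleton, xLast_append_singleton, List.count_append]
    cases xLast false bs <;> cases b <;> cases β <;> simp

lemma xLast_of_all (prev : Bool) (bs : List Bool) (h : bs.all id) :
    xLast prev bs = if Even bs.length then prev else !prev := by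
  induction bs generalizing prev with
  | nil => simp
  | cons b bs ih =>
    simp only [List.all_cons, id, Bool.and_eq_true] at h
    obtain ⟨rfl, h⟩ := h
    by_cases he : Even bs.length <;> simp [ih _ h, he, Nat.even_add_one]

lemma xLast_congr_of_not_all (p q : Bool) (bs : List Bool) (h : bs.all id = false) :
    xLast p bs = xLast q bs := by
  induction bs generalizing p q with
  | nil => simp at h
  | cons b bs ih =>
    cases b
    · simp
    · simpa using ih _ _ (by simpa using h)

lemma xLast_modifyHead (α : Bool) (bs : List Bool) (hodd : Odd bs.length) :
    xLast false (bs.modifyHead (· && !α)) = (xLast false bs && !(α && bs.all id)) := by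
  match α, bs with
  | false, bs => cases bs <;> simp
  | true, [] => simp at hodd
  | true, false :: bs => simp
  | true, true :: bs =>
    have heven : Even bs.length := by simpa [Nat.odd_add_one] using hodd
    cases hall : bs.all id
    · simpa [hall] using xLast_congr_of_not_all false true bs hall
    · simp [xLast_of_all _ bs hall, heven, hall]

def delEndsBool (α β : Bool) (bs : List Bool) : List Bool :=
  ((bs.modifyHead (· && !α)).reverse.modifyHead (· && !β)).reverse

theorem count_xSeq_delEndsBool (α β : Bool) (bs : List Bool) (hodd : Odd bs.length) :
    (xSeq false (delEndsBool α β bs)).count true +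
        (if Odd (bs.findIdx not) ∧ α then 1 else 0) + (if xLast false bs ∧ β then 1 else 0) =
      (xSeq false bs).count true + if bs.all id ∧ α ∧ β then 1 else 0 := by
  have hlast : bs.all id → xLast false bs := by
    intro h
    simp [xLast_of_all false bs h, Nat.not_even_iff_odd.mpr hodd]
  have head := count_xSeq_modifyHead α bs
  have tail := count_xSeq_modifyLast β (bs.modifyHead (· && !α))
  rw [xLast_modifyHead α bs hodd] at tail
  have overlap : (if xLast false bs ∧ β then 1 else 0) =
      (if (xLast false bs && !(α && bs.all id)) ∧ β then 1 else 0) +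
        if bs.all id ∧ α ∧ β then 1 else 0 := by
    cases α <;> cases β <;> cases hall : bs.all id <;> cases hx : xLast false bs <;> simp_all
  rw [delEndsBool]
  omega

def colourPattern (ls : List (Finset ℕ)) (c : ℕ) : List Bool := ls.map fun l => decide (c ∈ l)

lemma Xseq_length (prev : Finset ℕ) (ls : List (Finset ℕ)) :
    (Xseq prev ls).length = ls.length := by
  induction ls generalizing prev with
  | nil => rfl
  | cons l ls ih => simp [Xseq, ih]

lemma map_Xseq (c : ℕ) (prev : Finset ℕ) (ls : List (Finset ℕ)) :
    (Xseq prev ls).map (fun X => decide (c ∈ X)) =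
      xSeq (decide (c ∈ prev)) (colourPattern ls c) := by
  induction ls generalizing prev with
  | nil => rfl
  | cons l ls ih => simp [Xseq, colourPattern, ih]

lemma forall_mem_Xseq_subset {U prev : Finset ℕ} {ls : List (Finset ℕ)}
    (h : ∀ l ∈ ls, l ⊆ U) : ∀ X ∈ Xseq prev ls, X ⊆ U := by
  induction ls generalizing prev with
  | nil => simp [Xseq]
  | cons l ls ih =>
    simp only [Xseq, List.mem_cons, forall_eq_or_imp] at h ⊢
    exact ⟨Finset.sdiff_subset.trans h.1, ih h.2⟩

lemma SL_eq_sum_count {U : Finset ℕ} {ls : List (Finset ℕ)} (h : ∀ l ∈ ls, l ⊆ U) :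
    SL ls = ∑ c ∈ U, (xSeq false (colourPattern ls c)).count true := by
  simp [SL, Finset.sum_card_eq_sum_count (forall_mem_Xseq_subset h), map_Xseq]

lemma colourPattern_delEnds (c : ℕ) (p q : Finset ℕ) (ls : List (Finset ℕ)) :
    colourPattern (delEnds p q ls) c =
      delEndsBool (decide (c ∈ p)) (decide (c ∈ q)) (colourPattern ls c) := by
  have hsdiff (s a : Finset ℕ) :
      decide (c ∈ a \ s) = (decide (c ∈ a) && !decide (c ∈ s)) := by
    simp
  unfold colourPattern
  rw [delEnds, delEndsBool, List.map_reverse,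
    List.map_modifyHead_of_comm (g := (· \ q)) (g' := (· && !decide (c ∈ q))) (hsdiff q),
    List.map_reverse,
    List.map_modifyHead_of_comm (g := (· \ p)) (g' := (· && !decide (c ∈ p))) (hsdiff p)]

lemma forall_mem_delEnds_subset {U p q : Finset ℕ} {ls : List (Finset ℕ)}
    (h : ∀ l ∈ ls, l ⊆ U) : ∀ l ∈ delEnds p q ls, l ⊆ U := by
  have hsdiff (s a : Finset ℕ) (ha : a ⊆ U) : a \ s ⊆ U := Finset.sdiff_subset.trans ha
  simp only [delEnds, List.mem_reverse]
  exact List.forall_mem_modifyHead (hsdiff q) fun l hl =>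
    List.forall_mem_modifyHead (hsdiff p) h l (List.mem_reverse.mp hl)

lemma mem_Aset_iff_all {ls : List (Finset ℕ)} (hls : ls ≠ []) (c : ℕ) :
    c ∈ Aset ls ↔ (colourPattern ls c).all id := by
  cases ls with
  | nil => contradiction
  | cons l ls => simp [Aset, Finset.mem_foldl_inter, colourPattern]

lemma firstMissing_eq_findIdx {ls : List (Finset ℕ)} {c : ℕ} (h : ∃ l ∈ ls, c ∉ l) :
    firstMissing ls c = (colourPattern ls c).findIdx not := by
  rw [colourPattern, List.findIdx_map]
  set k := ls.findIdx (not ∘ fun l => decide (c ∈ l))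
  have hk : k < ls.length := List.findIdx_lt_length.mpr (by simpa using h)
  have hmem : k ∈ {i | i < ls.length ∧ c ∉ ls.getD i ∅} :=
    ⟨hk, by rw [List.getD_eq_getElem _ _ hk]; simpa using List.findIdx_getElem (w := hk)⟩
  refine le_antisymm (Nat.sInf_le hmem) (le_csInf ⟨k, hmem⟩ fun i ⟨hi, hc⟩ => ?_)
  by_contra! hik
  rw [List.getD_eq_getElem _ _ hi] at hc
  exact hc (by simpa using List.not_of_lt_findIdx hik)

lemma mem_Aset_union_hatX1_iff {ls : List (Finset ℕ)} (hodd : Odd ls.length) (c : ℕ) :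
    c ∈ Aset ls ∪ hatX1 ls ↔ Odd ((colourPattern ls c).findIdx not) := by
  have hls : ls ≠ [] := by rintro rfl; simp at hodd
  by_cases hA : c ∈ Aset ls
  · have hlen : (colourPattern ls c).findIdx not = ls.length := by
      rw [mem_Aset_iff_all hls] at hA
      simpa [List.findIdx_eq_length, colourPattern] using hA
    simp [hA, hlen, hodd]
  · have h : ∃ l ∈ ls, c ∉ l := by simpa [mem_Aset_iff_all hls, colourPattern] using hA
    rw [Finset.mem_union, hatX1, Finset.mem_filter, Finset.mem_sdiff, firstMissing_eq_findIdx h]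
    cases ls with
    | nil => contradiction
    | cons l ls => by_cases hc : c ∈ l <;> simp [hA, hc, colourPattern, List.findIdx_cons]

lemma mem_Xat_last_iff (ls : List (Finset ℕ)) (c : ℕ) :
    c ∈ Xat ls (ls.length - 1) ↔ xLast false (colourPattern ls c) := by
  have h := List.getLastD_map (f := fun X => decide (c ∈ X)) (l := Xseq ∅ ls) (a := ∅)
  simp only [map_Xseq, Finset.notMem_empty, decide_false] at h
  rw [xLast, h, Xat, ← Xseq_length ∅, List.getD_length_sub_one, decide_eq_true_iff]

lemma mem_Aset_union_hatXn_iff {ls : List (Finset ℕ)} (hodd : Odd ls.length) (c : ℕ) :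
    c ∈ Aset ls ∪ hatXn ls ↔ xLast false (colourPattern ls c) := by
  have hls : ls ≠ [] := by rintro rfl; simp at hodd
  by_cases hA : c ∈ Aset ls
  · rw [mem_Aset_iff_all hls] at hA
    have hlen : (colourPattern ls c).length = ls.length := List.length_map _
    simp [hA, xLast_of_all _ _ hA, hlen, Nat.not_even_iff_odd.mpr hodd,
      mem_Aset_iff_all hls]
  · simp [hA, hatXn, mem_Xat_last_iff]

/-- Lemma `lem:oddhat`: for a path with an odd number of vertices,
`S_{L[p,q]}(P) = S_L(P) − (|(A ∪ X̂_1) ∩ p| + |(A ∪ X̂_n) ∩ q| − |A ∩ p ∩ q|)`. -/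
theorem SL_delEnds_eq (ls : List (Finset ℕ)) (hodd : Odd ls.length)
    (p q : Finset ℕ) :
    (SL (delEnds p q ls) : ℤ) =
      (SL ls : ℤ) -
        ((((Aset ls ∪ hatX1 ls) ∩ p).card : ℤ) +
          (((Aset ls ∪ hatXn ls) ∩ q).card : ℤ) -
          ((Aset ls ∩ p ∩ q).card : ℤ)) := by
  have hls : ls ≠ [] := by rintro rfl; simp at hodd
  -- `p` and `q` are included so that the three intersections below lie in `U`.
  set U := p ∪ q ∪ ls.toFinset.sup id
  have hU : ∀ l ∈ ls, l ⊆ U := fun l hl =>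
    (Finset.le_sup (f := id) (List.mem_toFinset.mpr hl)).trans Finset.subset_union_right
  have hpU : p ⊆ U := Finset.subset_union_left.trans Finset.subset_union_left
  have hqU : q ⊆ U := Finset.subset_union_right.trans Finset.subset_union_left
  suffices SL (delEnds p q ls) + #((Aset ls ∪ hatX1 ls) ∩ p) + #((Aset ls ∪ hatXn ls) ∩ q) =
      SL ls + #(Aset ls ∩ p ∩ q) by omega
  rw [SL_eq_sum_count hU, SL_eq_sum_count (forall_mem_delEnds_subset hU),
    card_eq_sum_ite_mem (Finset.inter_subset_right.trans hpU),
    card_eq_sum_ite_mem (Finset.inter_subset_right.trans hqU),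
    card_eq_sum_ite_mem (Finset.inter_subset_right.trans hqU),
    ← Finset.sum_add_distrib, ← Finset.sum_add_distrib, ← Finset.sum_add_distrib]
  refine Finset.sum_congr rfl fun c _ => ?_
  simp only [Finset.mem_inter, mem_Aset_union_hatX1_iff hodd, mem_Aset_union_hatXn_iff hodd,
    mem_Aset_iff_all hls, colourPattern_delEnds]
  simpa [and_assoc] using count_xSeq_delEndsBool (decide (c ∈ p)) (decide (c ∈ q))
    (colourPattern ls c) (by simpa [colourPattern] using hodd)
end

section
/- Let m be a positive integer and let L be a list assignment on a path P with an odd number n of vertices v_1, …, v_n such that |L(v_i)| = 4m for all i. Then S_L(P) = 2nm − 2m + Σ_{k even, k < n} |X_{k−1} \ L(v_k)| + |X_n|. -/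
theorem Finset.card_add_card_sdiff_swap {α : Type*} [DecidableEq α] (s t : Finset α) :
    s.card + (t \ s).card = t.card + (s \ t).card := by
  rw [add_comm, card_sdiff_add_card, union_comm, ← card_sdiff_add_card, add_comm]

theorem Xseq_cons_cons (prev a b : Finset ℕ) (rest : List (Finset ℕ)) :
    Xseq prev (a :: b :: rest) = (a \ prev) :: (b \ (a \ prev)) :: Xseq (b \ (a \ prev)) rest :=
  rfl

/-- Since `X_{2j+2} = L(v_{2j+2}) \ X_{2j+1}`, each consecutive pair contributes
`|X_{2j+1}| + |X_{2j+2}| = |L(v_{2j+2})| + |X_{2j+1} \ L(v_{2j+2})|`. -/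
theorem sum_card_Xseq_of_length_eq_two_mul_add_one :
    ∀ (k : ℕ) (prev : Finset ℕ) (ls : List (Finset ℕ)), ls.length = 2 * k + 1 →
      ((Xseq prev ls).map Finset.card).sum =
        ∑ j ∈ Finset.range k, ((ls.getD (2 * j + 1) ∅).card +
          ((Xseq prev ls).getD (2 * j) ∅ \ ls.getD (2 * j + 1) ∅).card) +
        ((Xseq prev ls).getD (2 * k) ∅).card
  | 0, prev, [a], _ => by simp [Xseq]
  | k + 1, prev, a :: b :: rest, hlen => by
    have ih := sum_card_Xseq_of_length_eq_two_mul_add_one k (b \ (a \ prev)) rest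
      (by simp only [List.length_cons] at hlen; omega)
    rw [Xseq_cons_cons, Finset.sum_range_succ', List.map_cons, List.map_cons, List.sum_cons,
      List.sum_cons, ih, ← add_assoc, Finset.card_add_card_sdiff_swap]
    simp only [Nat.mul_succ, List.getD_cons_succ, List.getD_cons_zero, Nat.mul_zero, zero_add]
    ring

theorem SL_eq_extra_general (m : ℕ) (ls : List (Finset ℕ))
    (hodd : Odd ls.length)
    (hcard : ∀ i, i < ls.length → (ls.getD i ∅).card = 4 * m) :
    SL ls = 2 * ls.length * m - 2 * m +
      (∑ j ∈ Finset.range ((ls.length - 1) / 2),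
        (Xat ls (2 * j) \ ls.getD (2 * j + 1) ∅).card) +
      (Xat ls (ls.length - 1)).card := by
  obtain ⟨k, hk⟩ := hodd
  have hpairs : ∑ j ∈ Finset.range k, (ls.getD (2 * j + 1) ∅).card = 4 * m * k := by
    rw [Finset.sum_congr rfl fun j hj => hcard _ (by rw [Finset.mem_range] at hj; omega)]
    simp [mul_comm]
  rw [SL, sum_card_Xseq_of_length_eq_two_mul_add_one k ∅ ls hk, Finset.sum_add_distrib, hpairs]
  simp only [Xat, hk, Nat.add_sub_cancel, Nat.mul_div_cancel_left k two_pos]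
  congr 2
  rw [Nat.mul_add, Nat.add_mul, Nat.mul_one, Nat.add_sub_cancel]
  ring

/-- Lemma `lem:extra`: for a path with an odd number `n` of vertices, all of whose lists
have size `4m`, `S_L(P) = 2nm − 2m + Σ_{k even, k < n} |X_{k−1} \ L(v_k)| + |X_n|`
(the sum is over even 1-indexed `k` with `2 ≤ k < n`, i.e. `k = 2j + 2` for
`j < (n−1)/2`). -/
theorem SL_eq_extra (m : ℕ) (hm : 0 < m) (ls : List (Finset ℕ))
    (hodd : Odd ls.length)
    (hcard : ∀ i, i < ls.length → (ls.getD i ∅).card = 4 * m) :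
    SL ls = 2 * ls.length * m - 2 * m +
      (∑ j ∈ Finset.range ((ls.length - 1) / 2),
        (Xat ls (2 * j) \ ls.getD (2 * j + 1) ∅).card) +
      (Xat ls (ls.length - 1)).card :=
  SL_eq_extra_general m ls hodd hcard
end

section
/- Let m be a positive integer and let L be a list assignment on a path P with an odd number n of vertices v_1, …, v_n such that |L(v_i)| = 4m for all i. Then S_L(P) ≥ 2nm + 2m. -/
theorem mul_half_length_le_sum_card_Xseq (k : ℕ) :
    ∀ (prev : Finset ℕ) (ls : List (Finset ℕ)), (∀ s ∈ ls, k ≤ s.card) →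
      k * (ls.length / 2) ≤ ((Xseq prev ls).map Finset.card).sum
  | _, [], _ => by simp
  | _, [_], _ => by simp
  | prev, a :: b :: rest, h => by
    have ih := mul_half_length_le_sum_card_Xseq k (b \ (a \ prev)) rest
      fun s hs => h s (by simp [hs])
    -- `X_{i+1} = L(v_{i+1}) \ X_i`, so each consecutive pair `X_i, X_{i+1}` covers `L(v_{i+1})`.
    have hpair : b.card ≤ (b \ (a \ prev)).card + (a \ prev).card :=
      Finset.card_le_card_sdiff_add_card
    have hb : k ≤ b.card := h b (by simp)
    have hlen : (rest.length + 1 + 1) / 2 = rest.length / 2 + 1 := by omega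
    simp only [Xseq, List.map_cons, List.sum_cons, List.length_cons, hlen, mul_add]
    omega

theorem List.forall_mem_of_forall_getD {α : Type*} (ls : List α) (d : α) (p : α → Prop)
    (h : ∀ i, i < ls.length → p (ls.getD i d)) : ∀ a ∈ ls, p a := by
  intro a ha
  obtain ⟨i, hi, rfl⟩ := List.mem_iff_getElem.mp ha
  simpa only [List.getD_eq_getElem _ _ hi] using h i hi

theorem SL_ge_trivbound_general (m : ℕ) (ls : List (Finset ℕ))
    (hodd : Odd ls.length)
    (hcard : ∀ i, i < ls.length → (ls.getD i ∅).card = 4 * m) :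
    2 * ls.length * m + 2 * m ≤ SL ls := by
  have hmem := List.forall_mem_of_forall_getD ls ∅ (fun s => s.card = 4 * m) hcard
  obtain _ | ⟨a, rest⟩ := ls
  · simp at hodd
  have hrest := mul_half_length_le_sum_card_Xseq (4 * m) a rest
    fun s hs => (hmem s (List.mem_cons_of_mem a hs)).ge
  obtain ⟨j, hj⟩ : Even rest.length := by simpa [Nat.odd_add_one] using hodd
  have ha : a.card = 4 * m := hmem a List.mem_cons_self
  simp only [SL, Xseq, Finset.sdiff_empty, List.map_cons, List.sum_cons, List.length_cons] at hrest ⊢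
  rw [hj, ← two_mul, Nat.mul_div_cancel_left _ two_pos] at hrest
  rw [hj, ha]
  linarith

/-- Lemma `lem:trivbound`: for a path with an odd number `n` of vertices, all of whose
lists have size `4m`, `S_L(P) ≥ 2nm + 2m`. -/
theorem SL_ge_trivbound (m : ℕ) (hm : 0 < m) (ls : List (Finset ℕ))
    (hodd : Odd ls.length)
    (hcard : ∀ i, i < ls.length → (ls.getD i ∅).card = 4 * m) :
    2 * ls.length * m + 2 * m ≤ SL ls :=
  SL_ge_trivbound_general m ls hodd hcard
end
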